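/- Let V be a real Hilbert space with dual V*, A ∈ W^{1,∞}(I; L(V;V*)) with A(t) self-adjoint for a.e. t ∈ I (i.e. ⟨A(t)φ,ψ⟩ = ⟨A(t)ψ,φ⟩ for all φ,ψ ∈ V), and v ∈ H¹(I;V). Then t ↦ ⟨A(t)v(t),v(t)⟩ belongs to W^{1,1}(I) and for almost all t ∈ I, 2⟨A(t)v(t), v'(t)⟩ = (d/dt)⟨A(t)v(t),v(t)⟩ − ⟨A'(t)v(t),v(t)⟩. -/

import Mathlib

/-!
Both `A` and `v` are primitives of integrable functions, hence absolutely continuous on `[0, T]`,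
and so is `t ↦ A t (v t) (v t)`. By the Lebesgue differentiation theorem the product rule holds
at almost every `t`, and an absolutely continuous function whose derivative vanishes a.e. is
constant; hence the quadratic form is the primitive of `A' v v + A v' v + A v v'`. Symmetry of
`A t` turns `A v' v + A v v'` into `2 A v v'`.
-/

open MeasureTheory Filter Topology
open scoped RealInnerProductSpace ENNReal

noncomputable section

/-- Lebesgue measure on the time interval `I = (0,T)`. -/
def μI (T : ℝ) : Measure ℝ := volume.restrict (Set.Ioo 0 T)

variable {X : Type*} [NormedAddCommGroup X] [NormedSpace ℝ X]

/-- `u'` is the weak derivative of `u` on `(0,T)`: the (absolutely continuous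
representative of the) function `u` is the integral of `u'`. -/
def IsWeakDeriv (T : ℝ) (u u' : ℝ → X) : Prop :=
  IntervalIntegrable u' volume 0 T ∧
  ∀ t ∈ Set.Icc (0:ℝ) T, u t = u 0 + ∫ s in (0:ℝ)..t, u' s

/-- Membership in `L¹((0,T); X)`. -/
def MemL1 (T : ℝ) (u : ℝ → X) : Prop := MemLp u 1 (μI T)

/-- Membership in `L²((0,T); X)`. -/
def MemL2 (T : ℝ) (u : ℝ → X) : Prop := MemLp u 2 (μI T)

/-- Membership in `L^∞((0,T); X)`. -/
def MemLinf (T : ℝ) (u : ℝ → X) : Prop := MemLp u ⊤ (μI T)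

/-- `u ∈ H¹((0,T); X)` with weak derivative `u'`. -/
def MemH1 (T : ℝ) (u u' : ℝ → X) : Prop := MemL2 T u ∧ MemL2 T u' ∧ IsWeakDeriv T u u'

/-- `u ∈ W^{1,∞}((0,T); X)` with weak derivative `u'`. -/
def MemW1inf (T : ℝ) (u u' : ℝ → X) : Prop := MemLinf T u ∧ MemLinf T u' ∧ IsWeakDeriv T u u'

/-- `D 0 ∈ H^k((0,T); X)`, the family `D` listing its weak derivatives `D j = (D 0)⁽ʲ⁾`. -/
def MemHk (T : ℝ) (k : ℕ) (D : ℕ → ℝ → X) : Prop :=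
  (∀ j ≤ k, MemL2 T (D j)) ∧ ∀ j < k, IsWeakDeriv T (D j) (D (j+1))

/-- `D 0 ∈ W^{k,∞}((0,T); X)`, the family `D` listing its weak derivatives. -/
def MemWkinf (T : ℝ) (k : ℕ) (D : ℕ → ℝ → X) : Prop :=
  (∀ j ≤ k, MemLinf T (D j)) ∧ ∀ j < k, IsWeakDeriv T (D j) (D (j+1))

open Set

section AbsolutelyContinuous

variable {M N : Type*} [PseudoMetricSpace M] [PseudoMetricSpace N] {a b : ℝ}

theorem AbsolutelyContinuousOnInterval.of_dist_le {f : ℝ → M} {g : ℝ → N} {C : ℝ}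
    (hg : AbsolutelyContinuousOnInterval g a b)
    (hfg : ∀ x ∈ uIcc a b, ∀ y ∈ uIcc a b, dist (f x) (f y) ≤ C * dist (g x) (g y)) :
    AbsolutelyContinuousOnInterval f a b := by
  unfold AbsolutelyContinuousOnInterval at hg ⊢
  refine squeeze_zero' (.of_forall fun _ ↦ Finset.sum_nonneg fun _ _ ↦ dist_nonneg) ?_
    (by simpa using hg.const_mul C)
  rw [eventually_inf_principal]
  filter_upwards with ⟨n, I⟩ hnI
  rw [Finset.mul_sum]
  gcongr with i hi
  exact hfg _ (hnI.1 i hi).1 _ (hnI.1 i hi).2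

theorem AbsolutelyContinuousOnInterval.prodMk {f : ℝ → M} {g : ℝ → N}
    (hf : AbsolutelyContinuousOnInterval f a b) (hg : AbsolutelyContinuousOnInterval g a b) :
    AbsolutelyContinuousOnInterval (fun x ↦ (f x, g x)) a b := by
  unfold AbsolutelyContinuousOnInterval at hf hg ⊢
  refine squeeze_zero (fun _ ↦ Finset.sum_nonneg fun _ _ ↦ dist_nonneg) (fun E ↦ ?_)
    (by simpa using hf.add hg)
  rw [← Finset.sum_add_distrib]
  gcongr
  exact max_le_add_of_nonneg dist_nonneg dist_nonneg

end AbsolutelyContinuous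

section Normed

variable {E F G : Type*} [NormedAddCommGroup E] [NormedSpace ℝ E]
  [NormedAddCommGroup F] [NormedSpace ℝ F] [NormedAddCommGroup G] [NormedSpace ℝ G] {a b : ℝ}

theorem AbsolutelyContinuousOnInterval.clm_apply {c : ℝ → E →L[ℝ] F} {u : ℝ → E}
    (hc : AbsolutelyContinuousOnInterval c a b) (hu : AbsolutelyContinuousOnInterval u a b) :
    AbsolutelyContinuousOnInterval (fun x ↦ c x (u x)) a b := by
  obtain ⟨C, hC⟩ := hc.exists_bound
  obtain ⟨D, hD⟩ := hu.exists_bound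
  refine (hc.prodMk hu).of_dist_le (C := D + C) fun x hx y hy ↦ ?_
  have hD0 : 0 ≤ D := (norm_nonneg _).trans (hD x hx)
  have hC0 : 0 ≤ C := (norm_nonneg _).trans (hC y hy)
  calc dist (c x (u x)) (c y (u y))
      ≤ dist (c x (u x)) (c y (u x)) + dist (c y (u x)) (c y (u y)) := dist_triangle _ _ _
    _ ≤ dist (c x) (c y) * D + C * dist (u x) (u y) := by
        rw [dist_eq_norm, dist_eq_norm, dist_eq_norm, dist_eq_norm, ← sub_apply, ← map_sub]
        gcongr
        · exact ((c x - c y).le_opNorm _).trans (by gcongr; exact hD x hx)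
        · exact ((c y).le_opNorm _).trans (by gcongr; exact hC y hy)
    _ ≤ (D + C) * dist (c x, u x) (c y, u y) := by
        rw [add_mul, mul_comm _ D]
        gcongr
        exacts [le_max_left _ _, le_max_right _ _]

theorem IntervalIntegrable.absolutelyContinuousOnInterval_primitive {f : ℝ → E} {c : ℝ}
    (hf : IntervalIntegrable f volume a b) (hc : c ∈ uIcc a b) :
    AbsolutelyContinuousOnInterval (fun x ↦ ∫ t in c..x, f t) a b := by
  refine (hf.norm.absolutelyContinuousOnInterval_intervalIntegral hc).of_dist_le (C := 1)
    fun x hx y hy ↦ ?_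
  have hcx := hf.mono_set (uIcc_subset_uIcc hc hx)
  have hcy := hf.mono_set (uIcc_subset_uIcc hc hy)
  rw [one_mul, dist_eq_norm, dist_eq_norm, intervalIntegral.integral_interval_sub_left hcx hcy,
    intervalIntegral.integral_interval_sub_left hcx.norm hcy.norm]
  exact intervalIntegral.norm_integral_le_abs_integral_norm

theorem IntervalIntegrable.bilin_continuousOn (B : E →L[ℝ] F →L[ℝ] G)
    {f : ℝ → E} {g : ℝ → F}
    (hf : IntervalIntegrable f volume a b) (hg : ContinuousOn g (uIcc a b)) :
    IntervalIntegrable (fun t ↦ B (f t) (g t)) volume a b := by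
  rw [intervalIntegrable_iff] at hf ⊢
  obtain ⟨C, hC⟩ := isCompact_uIcc.exists_bound_of_continuousOn hg
  exact B.integrable_of_bilin_of_bdd_right C hf
    ((hg.mono uIoc_subset_uIcc).aestronglyMeasurable measurableSet_uIoc)
    (ae_restrict_of_forall_mem measurableSet_uIoc fun x hx ↦ hC x (uIoc_subset_uIcc hx))

theorem IntervalIntegrable.continuousOn_bilin (B : E →L[ℝ] F →L[ℝ] G)
    {f : ℝ → E} {g : ℝ → F}
    (hf : ContinuousOn f (uIcc a b)) (hg : IntervalIntegrable g volume a b) :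
    IntervalIntegrable (fun t ↦ B (f t) (g t)) volume a b :=
  hg.bilin_continuousOn B.flip hf

theorem AbsolutelyContinuousOnInterval.eq_add_integral_of_ae_hasDerivAt [CompleteSpace E]
    {f φ : ℝ → E}
    (hf : AbsolutelyContinuousOnInterval f a b) (hφ : IntervalIntegrable φ volume a b)
    (hderiv : ∀ᵐ x, x ∈ uIcc a b → HasDerivAt f (φ x) x) :
    ∀ x ∈ uIcc a b, f x = f a + ∫ t in a..x, φ t := by
  obtain ⟨C, hC⟩ := (hf.sub (hφ.absolutelyContinuousOnInterval_primitive left_mem_uIcc))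
    |>.const_of_ae_hasDerivAt_zero <| by
      filter_upwards [hderiv, hφ.ae_hasDerivAt_integral] with x hfx hφx hx
      simpa using (hfx hx).sub (hφx hx a left_mem_uIcc)
  intro x hx
  have hCa := hC a left_mem_uIcc
  have hCx := hC x hx
  simp only [Pi.sub_apply, intervalIntegral.integral_same, sub_zero] at hCa hCx
  rw [hCa, ← hCx, sub_add_cancel]

end Normed

namespace IsWeakDeriv

variable {E F : Type*} [NormedAddCommGroup E] [NormedSpace ℝ E]
  [NormedAddCommGroup F] [NormedSpace ℝ F] {T : ℝ} {u u' : ℝ → E}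

theorem absolutelyContinuousOnInterval (hu : IsWeakDeriv T u u') (hT : 0 ≤ T) :
    AbsolutelyContinuousOnInterval u 0 T :=
  (hu.1.absolutelyContinuousOnInterval_primitive left_mem_uIcc).of_dist_le (C := 1)
    fun x hx y hy ↦ by
      rw [uIcc_of_le hT] at hx hy
      rw [one_mul, hu.2 x hx, hu.2 y hy, dist_add_left]

theorem memL1 (hu : IsWeakDeriv T u u') (hT : 0 ≤ T) : MemL1 T u := by
  have hcont := (hu.absolutelyContinuousOnInterval hT).continuousOn
  rw [uIcc_of_le hT] at hcont
  exact memLp_one_iff_integrable.2 ((hcont.integrableOn_Icc).mono_set Ioo_subset_Icc_self)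

theorem memL1_deriv (hu : IsWeakDeriv T u u') (hT : 0 ≤ T) : MemL1 T u' :=
  memLp_one_iff_integrable.2 <|
    ((intervalIntegrable_iff_integrableOn_Ioc_of_le hT).1 hu.1).mono_set Ioo_subset_Ioc_self

theorem ae_hasDerivAt [CompleteSpace E] (hu : IsWeakDeriv T u u') :
    ∀ᵐ t, t ∈ Ioo 0 T → HasDerivAt u (u' t) t := by
  filter_upwards [hu.1.ae_hasDerivAt_integral] with t ht hmem
  have hT : 0 ≤ T := hmem.1.le.trans hmem.2.le
  have hIcc : t ∈ uIcc 0 T := by rw [uIcc_of_le hT]; exact Ioo_subset_Icc_self hmem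
  refine ((ht hIcc 0 left_mem_uIcc).const_add (u 0)).congr_of_eventuallyEq ?_
  filter_upwards [Ioo_mem_nhds hmem.1 hmem.2] with s hs
  exact hu.2 s (Ioo_subset_Icc_self hs)

theorem of_absolutelyContinuousOnInterval [CompleteSpace E] (hT : 0 ≤ T)
    (hu : AbsolutelyContinuousOnInterval u 0 T) (hu' : IntervalIntegrable u' volume 0 T)
    (hderiv : ∀ᵐ t, t ∈ Ioo 0 T → HasDerivAt u (u' t) t) : IsWeakDeriv T u u' := by
  refine ⟨hu', fun t ht ↦
    hu.eq_add_integral_of_ae_hasDerivAt hu' ?_ t (by rwa [uIcc_of_le hT])⟩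
  have hne : ∀ c : ℝ, ∀ᵐ x, x ≠ c := fun c ↦ by simp [ae_iff, measure_singleton]
  filter_upwards [hderiv, hne 0, hne T] with x hx hx0 hxT hmem
  rw [uIcc_of_le hT] at hmem
  exact hx ⟨lt_of_le_of_ne hmem.1 hx0.symm, lt_of_le_of_ne hmem.2 hxT⟩

theorem clm_apply [CompleteSpace E] [CompleteSpace F] {c c' : ℝ → E →L[ℝ] F}
    (hc : IsWeakDeriv T c c') (hu : IsWeakDeriv T u u') (hT : 0 ≤ T) :
    IsWeakDeriv T (fun t ↦ c t (u t)) (fun t ↦ c' t (u t) + c t (u' t)) := by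
  have hc_ac := hc.absolutelyContinuousOnInterval hT
  have hu_ac := hu.absolutelyContinuousOnInterval hT
  refine of_absolutelyContinuousOnInterval hT (hc_ac.clm_apply hu_ac)
    ((hc.1.bilin_continuousOn (.id ℝ _) hu_ac.continuousOn).add
      (hu.1.continuousOn_bilin (.id ℝ _) hc_ac.continuousOn)) ?_
  filter_upwards [hc.ae_hasDerivAt, hu.ae_hasDerivAt] with t hct hut ht
  exact (hct ht).clm_apply (hut ht)

end IsWeakDeriv

/-- differentiation of the quadratic form of `A`: for
`A ∈ W^{1,∞}(I;L(V;V*))` pointwise self-adjoint and `v ∈ H¹(I;V)`, the function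
`t ↦ ⟨A(t)v(t), v(t)⟩` belongs to `W^{1,1}(I)` and a.e.
`2⟨A(t)v(t), v'(t)⟩ = (d/dt)⟨A(t)v(t),v(t)⟩ − ⟨A'(t)v(t),v(t)⟩`. -/
theorem statement15
    {V : Type*} [NormedAddCommGroup V] [InnerProductSpace ℝ V] [CompleteSpace V]
    (T : ℝ) (hT : 0 < T)
    (A A' : ℝ → V →L[ℝ] V →L[ℝ] ℝ) (hA : MemW1inf T A A')
    (hAsym : ∀ᵐ t ∂ (μI T), ∀ x y : V, A t x y = A t y x)
    (v v' : ℝ → V) (hv : MemH1 T v v') :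
    ∃ g' : ℝ → ℝ,
      MemL1 T (fun t => A t (v t) (v t)) ∧ MemL1 T g' ∧
      IsWeakDeriv T (fun t => A t (v t) (v t)) g' ∧
      ∀ᵐ t ∂ (μI T), 2 * A t (v t) (v' t) = g' t - A' t (v t) (v t) := by
  obtain ⟨-, -, hA⟩ := hA
  obtain ⟨-, -, hv⟩ := hv
  have hQ := (hA.clm_apply hv hT.le).clm_apply hv hT.le
  refine ⟨_, hQ.memL1 hT.le, hQ.memL1_deriv hT.le, hQ, ?_⟩
  filter_upwards [hAsym] with t hsym
  simp only [add_apply, hsym (v' t) (v t)]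
  ring
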